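/- Let α > −1 with α ≠ 0, let a₁, a₂ ∈ ℝ and ε > 0, and define c₁ : ℝ² ∖ {0} → ℝ by c₁(y) = ε·g_α(|y|)·(a₁ y₁ + a₂ y₂)/|y|, where g_α(r) = −r/(4α(1+α)(1+r^{2+2α})). Then Δc₁(y) + 8(1+α)² |y|^{2α} (1+|y|^{2+2α})^{−2} c₁(y) = −ε (a₁ y₁ + a₂ y₂) |y|^{2α} (1+|y|^{2+2α})^{−2} for every y ∈ ℝ² ∖ {0}. -/

import Mathlib

/-- The Euclidean norm on `ℝ²` (realized as `ℝ × ℝ`). -/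
noncomputable def nrm (x : ℝ × ℝ) : ℝ := Real.sqrt (x.1 ^ 2 + x.2 ^ 2)

/-- The Laplacian `Δ = ∂²/∂x₁² + ∂²/∂x₂²` on `ℝ²`. -/
noncomputable def lap (u : ℝ × ℝ → ℝ) (x : ℝ × ℝ) : ℝ :=
  deriv (deriv fun s : ℝ => u (x.1 + s, x.2)) 0 +
  deriv (deriv fun s : ℝ => u (x.1, x.2 + s)) 0

/-!
Off the origin `c₁(z) = (a·z) φ(|z|²)` with `a = (a₁, a₂)`, `φ(s) = K (1 + s^{1+α})⁻¹` and
`K = -ε / (4α(1+α))`. For any function of this form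
`Δ[(a·z) φ(|z|²)](y) = (a·y) (8 φ'(s) + 4 s φ''(s))` with `s = |y|²`, so the claim reduces to the
radial identity `8 φ' + 4 s φ'' + 8(1+α)² s^α (1+s^{1+α})⁻² φ = 4α(1+α) K s^α (1+s^{1+α})⁻²`,
a direct computation; the choice of `K` makes the right-hand side the forcing term.
-/

open Filter Topology

lemma sq_add_sq_pos_of_ne_zero {z : ℝ × ℝ} (hz : z ≠ 0) : 0 < z.1 ^ 2 + z.2 ^ 2 := by
  rcases ne_or_eq z.1 0 with h₁ | h₁
  · positivity
  · have h₂ : z.2 ≠ 0 := fun h₂ => hz (Prod.ext h₁ h₂)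
    positivity

lemma nrm_pos {z : ℝ × ℝ} (hz : z ≠ 0) : 0 < nrm z :=
  Real.sqrt_pos.2 (sq_add_sq_pos_of_ne_zero hz)

lemma nrm_rpow_two_mul (z : ℝ × ℝ) (p : ℝ) : nrm z ^ (2 * p) = (z.1 ^ 2 + z.2 ^ 2) ^ p := by
  rw [nrm, Real.sqrt_eq_rpow, ← Real.rpow_mul (by positivity)]
  ring_nf

lemma lap_congr_of_eventuallyEq {u v : ℝ × ℝ → ℝ} {x : ℝ × ℝ} (h : u =ᶠ[𝓝 x] v) :
    lap u x = lap v x := by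
  have line₁ : Tendsto (fun s : ℝ => (x.1 + s, x.2)) (𝓝 0) (𝓝 x) := by
    simpa using (Continuous.tendsto (by fun_prop) 0 : Tendsto (fun s : ℝ => (x.1 + s, x.2)) _ _)
  have line₂ : Tendsto (fun s : ℝ => (x.1, x.2 + s)) (𝓝 0) (𝓝 x) := by
    simpa using (Continuous.tendsto (by fun_prop) 0 : Tendsto (fun s : ℝ => (x.1, x.2 + s)) _ _)
  exact congrArg₂ (· + ·) (h.comp_tendsto line₁).deriv.deriv_eq
    (h.comp_tendsto line₂).deriv.deriv_eq

lemma deriv_deriv_affine_mul_comp_sq {h h' : ℝ → ℝ} {h'' b c x d : ℝ}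
    (hh : ∀ᶠ r in 𝓝 (x ^ 2 + d), HasDerivAt h (h' r) r)
    (hh' : HasDerivAt h' h'' (x ^ 2 + d)) :
    deriv (deriv fun t => (b * t + c) * h ((x + t) ^ 2 + d)) 0
      = 4 * b * x * h' (x ^ 2 + d) + c * (2 * h' (x ^ 2 + d) + 4 * x ^ 2 * h'') := by
  set σ : ℝ → ℝ := fun t => (x + t) ^ 2 + d
  have hσ (t : ℝ) : HasDerivAt σ (2 * (x + t)) t :=
    ((((hasDerivAt_id t).const_add x).pow 2).add_const d).congr_deriv (by simp)
  have hσ0 : σ 0 = x ^ 2 + d := by simp [σ]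
  rw [← hσ0] at hh' hh
  have hnear : ∀ᶠ t in 𝓝 (0 : ℝ), HasDerivAt h (h' (σ t)) (σ t) :=
    (Continuous.tendsto (by fun_prop) 0 : Tendsto σ _ _).eventually hh
  have hline (t : ℝ) : HasDerivAt (fun t => b * t + c) b t := by
    simpa using ((hasDerivAt_id t).const_mul b).add_const c
  have hderiv : deriv (fun t => (b * t + c) * h (σ t)) =ᶠ[𝓝 0]
      fun t => b * h (σ t) + (b * t + c) * (h' (σ t) * (2 * (x + t))) := by
    filter_upwards [hnear] with t ht
    exact ((hline t).fun_mul (ht.comp t (hσ t))).deriv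
  have hlin2 : HasDerivAt (fun t => 2 * (x + t)) 2 0 := by
    simpa using ((hasDerivAt_id (0 : ℝ)).const_add x).const_mul 2
  have hderiv2 :
      HasDerivAt (fun t => b * h (σ t) + (b * t + c) * (h' (σ t) * (2 * (x + t))))
      (b * (h' (σ 0) * (2 * (x + 0))) + (b * (h' (σ 0) * (2 * (x + 0)))
        + (b * 0 + c) * (h'' * (2 * (x + 0)) * (2 * (x + 0)) + h' (σ 0) * 2))) 0 :=
    ((hh.self_of_nhds.comp 0 (hσ 0)).const_mul b).fun_add
      ((hline 0).fun_mul ((hh'.comp 0 (hσ 0)).fun_mul hlin2))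
  rw [hderiv.deriv_eq, hderiv2.deriv, hσ0]
  ring

lemma lap_linear_mul_comp_sq_add_sq {h h' : ℝ → ℝ} {h'' a₁ a₂ : ℝ} {y : ℝ × ℝ}
    (hh : ∀ᶠ r in 𝓝 (y.1 ^ 2 + y.2 ^ 2), HasDerivAt h (h' r) r)
    (hh' : HasDerivAt h' h'' (y.1 ^ 2 + y.2 ^ 2)) :
    lap (fun z => (a₁ * z.1 + a₂ * z.2) * h (z.1 ^ 2 + z.2 ^ 2)) y
      = (a₁ * y.1 + a₂ * y.2)
          * (8 * h' (y.1 ^ 2 + y.2 ^ 2) + 4 * (y.1 ^ 2 + y.2 ^ 2) * h'') := by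
  set c := a₁ * y.1 + a₂ * y.2
  have e₁ : (fun t => (a₁ * (y.1 + t) + a₂ * y.2) * h ((y.1 + t) ^ 2 + y.2 ^ 2))
      = fun t => (a₁ * t + c) * h ((y.1 + t) ^ 2 + y.2 ^ 2) := by
    funext t; ring
  have e₂ : (fun t => (a₁ * y.1 + a₂ * (y.2 + t)) * h (y.1 ^ 2 + (y.2 + t) ^ 2))
      = fun t => (a₂ * t + c) * h ((y.2 + t) ^ 2 + y.1 ^ 2) := by
    funext t; rw [add_comm (y.1 ^ 2)]; ring
  have hh₂ : ∀ᶠ r in 𝓝 (y.2 ^ 2 + y.1 ^ 2), HasDerivAt h (h' r) r := by rwa [add_comm]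
  have hh₂' : HasDerivAt h' h'' (y.2 ^ 2 + y.1 ^ 2) := by rwa [add_comm]
  simp only [lap]
  rw [e₁, e₂, deriv_deriv_affine_mul_comp_sq hh hh', deriv_deriv_affine_mul_comp_sq hh₂ hh₂',
    add_comm (y.2 ^ 2)]
  ring

lemma hasDerivAt_inv_one_add_rpow {p s : ℝ} (hs : 0 < s) :
    HasDerivAt (fun r => (1 + r ^ p)⁻¹) (-(p * s ^ (p - 1)) / (1 + s ^ p) ^ 2) s := by
  have hpos : 0 < 1 + s ^ p := by positivity
  exact (((Real.hasDerivAt_rpow_const (p := p) (Or.inl hs.ne')).const_add 1).fun_inv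
    hpos.ne').congr_deriv (by ring)

lemma hasDerivAt_neg_mul_rpow_div_one_add_rpow_sq {p s : ℝ} (hs : 0 < s) :
    HasDerivAt (fun r => -(p * r ^ (p - 1)) / (1 + r ^ p) ^ 2)
      (-(p * (p - 1) * s ^ (p - 2)) / (1 + s ^ p) ^ 2
        + 2 * p ^ 2 * (s ^ (p - 1)) ^ 2 / (1 + s ^ p) ^ 3) s := by
  have hpos : 0 < 1 + s ^ p := by positivity
  have hnum := ((Real.hasDerivAt_rpow_const (p := p - 1) (Or.inl hs.ne')).const_mul p).fun_neg
  have hden := ((Real.hasDerivAt_rpow_const (p := p) (Or.inl hs.ne')).const_add 1).fun_pow 2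
  refine (hnum.fun_div hden (pow_ne_zero 2 hpos.ne')).congr_deriv ?_
  rw [show p - 1 - 1 = p - 2 by ring]
  field_simp
  ring

lemma inv_one_add_rpow_radial_ode {p s : ℝ} (hs : 0 < s) :
    8 * (-(p * s ^ (p - 1)) / (1 + s ^ p) ^ 2)
      + 4 * s * (-(p * (p - 1) * s ^ (p - 2)) / (1 + s ^ p) ^ 2
        + 2 * p ^ 2 * (s ^ (p - 1)) ^ 2 / (1 + s ^ p) ^ 3)
      + 8 * p ^ 2 * s ^ (p - 1) / (1 + s ^ p) ^ 2 * (1 + s ^ p)⁻¹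
      = 4 * p * (p - 1) * s ^ (p - 1) / (1 + s ^ p) ^ 2 := by
  have hp : s ^ p = s * s ^ (p - 1) := by
    rw [mul_comm, ← Real.rpow_add_one hs.ne']; ring_nf
  have hp2 : s ^ (p - 2) = s ^ (p - 1) / s := by
    rw [← Real.rpow_sub_one hs.ne']; ring_nf
  have hpos : 0 < 1 + s * s ^ (p - 1) := by positivity
  rw [hp, hp2]
  field_simp
  ring

theorem stmt4 (α : ℝ) (hα : α > -1) (hα0 : α ≠ 0) (a₁ a₂ ε : ℝ)
    (g : ℝ → ℝ)
    (hg : ∀ r : ℝ, 0 < r →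
      g r = -r / (4 * α * (1 + α) * (1 + r ^ (2 + 2 * α))))
    (c₁ : ℝ × ℝ → ℝ)
    (hc₁ : ∀ y : ℝ × ℝ, y ≠ 0 →
      c₁ y = ε * g (nrm y) * (a₁ * y.1 + a₂ * y.2) / nrm y) :
    ∀ y : ℝ × ℝ, y ≠ 0 →
      lap c₁ y
        + 8 * (1 + α) ^ 2 * nrm y ^ (2 * α) / (1 + nrm y ^ (2 + 2 * α)) ^ 2 * c₁ y
      = -ε * (a₁ * y.1 + a₂ * y.2) * nrm y ^ (2 * α)
          / (1 + nrm y ^ (2 + 2 * α)) ^ 2 := by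
  intro y hy
  have h1α : 1 + α ≠ 0 := by linarith
  set K := -ε / (4 * α * (1 + α)) with hK_def
  have hK : K * (4 * (1 + α) * α) = -ε := by
    rw [hK_def]; field_simp
  have hc : c₁ =ᶠ[𝓝 y]
      fun z => (a₁ * z.1 + a₂ * z.2) * (K * (1 + (z.1 ^ 2 + z.2 ^ 2) ^ (1 + α))⁻¹) := by
    filter_upwards [eventually_ne_nhds hy] with z hz
    have hz' := nrm_pos hz
    rw [hc₁ z hz, hg _ hz', show 2 + 2 * α = 2 * (1 + α) by ring, nrm_rpow_two_mul, hK_def]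
    field_simp
  have hs := sq_add_sq_pos_of_ne_zero hy
  have hh : ∀ᶠ r in 𝓝 (y.1 ^ 2 + y.2 ^ 2), HasDerivAt (fun r => K * (1 + r ^ (1 + α))⁻¹)
      (K * (-((1 + α) * r ^ (1 + α - 1)) / (1 + r ^ (1 + α)) ^ 2)) r :=
    (eventually_gt_nhds hs).mono fun r hr => (hasDerivAt_inv_one_add_rpow hr).const_mul K
  rw [lap_congr_of_eventuallyEq hc, lap_linear_mul_comp_sq_add_sq hh
      ((hasDerivAt_neg_mul_rpow_div_one_add_rpow_sq hs).const_mul K), hc.self_of_nhds,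
    show 2 + 2 * α = 2 * (1 + α) by ring, nrm_rpow_two_mul, nrm_rpow_two_mul]
  have hode := inv_one_add_rpow_radial_ode (p := 1 + α) hs
  rw [add_sub_cancel_left] at hode ⊢
  set a := a₁ * y.1 + a₂ * y.2
  set s := y.1 ^ 2 + y.2 ^ 2
  linear_combination (K * a) * hode + (a * s ^ α / (1 + s ^ (1 + α)) ^ 2) * hK
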